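/- Let u≥3 be odd and write ω₃∨=(1,−1)∈ℤ² (coweight) and ω₃=(1,−1) (weight). For every n∈ℤ, all g,g′∈ℤ², all λ,λ′∈P⁺ᵘ and all γ,γ′∈ℝ²: S_{(g+n·ω₃∨, ∇ⁿ(λ), γ−n(u/2)ω₃),(g′,λ′,γ′)} = e^{−2πi·n·(⟨γ′,ω₃∨⟩ + j_{λ′} − u/3)}·S_{(g,λ,γ),(g′,λ′,γ′)}. (This factorization of the n-dependence along the semirelaxed coresolution is the key step in the computation of the semirelaxed modular S-transform.) -/
import Mathlib


noncomputable section

open Complex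

/-- The six elements of the Weyl group `S₃` of sl₃ acting on weights in
Dynkin-label coordinates: `id, w₁, w₂, w₁w₂, w₂w₁, w₃`. -/
def wmap (w : Fin 6) (x : ℂ × ℂ) : ℂ × ℂ :=
  ![x, (-x.1, x.1 + x.2), (x.1 + x.2, -x.2), (-x.1 - x.2, x.1),
    (x.2, -x.1 - x.2), (-x.2, -x.1)] w

/-- The signs of the six Weyl group elements. -/
def wdet : Fin 6 → ℤ := ![1, -1, -1, 1, 1, -1]

/-- The normalised invariant bilinear form of sl₃ in Dynkin-label coordinates
(the same formula gives the form on coweights and the weight/coweight pairing). -/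
def bform (x y : ℂ × ℂ) : ℂ :=
  (2 * x.1 * y.1 + x.1 * y.2 + x.2 * y.1 + 2 * x.2 * y.2) / 3

/-- The Weyl vector `ρ = (1,1)`. -/
def rho : ℂ × ℂ := (1, 1)

/-- The set `P⁺ᵘ` of triples of nonnegative integers summing to `u-3`. -/
def Pplus (u : ℕ) : Finset (ℕ × ℕ × ℕ) :=
  (Finset.range u ×ˢ Finset.range u ×ˢ Finset.range u).filter
    (fun l => l.1 + l.2.1 + l.2.2 = u - 3)

/-- The finite part `λ̄ = (λ₁,λ₂)` of a triple `λ = (λ₀,λ₁,λ₂)`. -/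
def bar (l : ℕ × ℕ × ℕ) : ℂ × ℂ := ((l.2.1 : ℂ), (l.2.2 : ℂ))

/-- `j_λ = -(λ₁-λ₂)/3`. -/
def jBP (l : ℕ × ℕ × ℕ) : ℂ := -(((l.2.1 : ℂ) - (l.2.2 : ℂ)) / 3)

/-- The Bershadsky–Polyakov minimal-model S-matrix. -/
def SBP (u : ℕ) (l l' : ℕ × ℕ × ℕ) : ℂ :=
  (I / (Real.sqrt 3 * u)) * exp (2 * Real.pi * I * (jBP l + jBP l' - (u : ℂ) / 3)) *
    ∑ w : Fin 6, (wdet w : ℂ) *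
      exp (-4 * Real.pi * I * bform (wmap w (bar l + rho)) (bar l' + rho) / u)

/-- `∇(λ₀,λ₁,λ₂) = (λ₁,λ₂,λ₀)`. -/
def nabla (l : ℕ × ℕ × ℕ) : ℕ × ℕ × ℕ := (l.2.1, l.2.2, l.1)

/-- The `ℤ`-action `n ↦ ∇ⁿ` (well defined since `∇³ = id`). -/
def nablaZ (n : ℤ) (l : ℕ × ℕ × ℕ) : ℕ × ℕ × ℕ := nabla^[(n % 3).toNat] l

/-- Embedding of coweights `(g₁,g₂) ∈ ℤ²` into `ℂ²`. -/
def cw (g : ℤ × ℤ) : ℂ × ℂ := ((g.1 : ℂ), (g.2 : ℂ))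

/-- Embedding of real weights into `ℂ²`. -/
def rpair (x : ℝ × ℝ) : ℂ × ℂ := ((x.1 : ℂ), (x.2 : ℂ))

/-- The fully relaxed sl₃ S-matrix
`S_{(g,λ,γ),(g′,λ′,γ′)} = e^{-2πi(⟨g,g′⟩u/2+⟨γ,g′⟩+⟨g,γ′⟩)}·S^{BP}_{λ,λ′}`. -/
def Sfull (u : ℕ) (g : ℤ × ℤ) (l : ℕ × ℕ × ℕ) (γ : ℝ × ℝ)
    (g' : ℤ × ℤ) (l' : ℕ × ℕ × ℕ) (γ' : ℝ × ℝ) : ℂ :=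
  exp (-2 * Real.pi * I *
      (bform (cw g) (cw g') * u / 2 + bform (rpair γ) (cw g') + bform (cw g) (rpair γ'))) *
    SBP u l l'

lemma wmap0 (x : ℂ × ℂ) : wmap 0 x = x := rfl
lemma wmap1 (x : ℂ × ℂ) : wmap 1 x = (-x.1, x.1 + x.2) := rfl
lemma wmap2 (x : ℂ × ℂ) : wmap 2 x = (x.1 + x.2, -x.2) := rfl
lemma wmap3 (x : ℂ × ℂ) : wmap 3 x = (-x.1 - x.2, x.1) := rfl
lemma wmap4 (x : ℂ × ℂ) : wmap 4 x = (x.2, -x.1 - x.2) := rfl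
lemma wmap5 (x : ℂ × ℂ) : wmap 5 x = (-x.2, -x.1) := rfl

lemma expkey (X Y : ℂ) (k : ℤ) (h : X = Y + k * (2 * Real.pi * I)) : exp X = exp Y := by
  rw [h, exp_add, Complex.exp_int_mul_two_pi_mul_I, mul_one]

set_option maxHeartbeats 1600000 in
lemma SBP_nabla (u : ℕ) (hu : 3 ≤ u) (l l' : ℕ × ℕ × ℕ)
    (hs : l.1 + l.2.1 + l.2.2 = u - 3) :
    SBP u (nabla l) l' = exp (-(2 * Real.pi * I) * (jBP l' - (u : ℂ) / 3)) * SBP u l l' := by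
  have hu0 : (u : ℂ) ≠ 0 := Nat.cast_ne_zero.mpr (by omega)
  have hu' : (u : ℂ) = (l.1 : ℂ) + l.2.1 + l.2.2 + 3 := by
    have h3 : l.1 + l.2.1 + l.2.2 + 3 = u := by omega
    exact_mod_cast (congrArg (Nat.cast : ℕ → ℂ) h3).symm
  have hD : ((l.1 : ℂ) + l.2.1 + l.2.2 + 3) ≠ 0 := hu' ▸ hu0
  have h : ∀ v s : Fin 6, ∀ k : ℤ,
      (2 * (Real.pi:ℂ) * I * (jBP (nabla l) + jBP l' - (u : ℂ) / 3)
        + -4 * Real.pi * I * bform (wmap v (bar (nabla l) + rho)) (bar l' + rho) / u)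
      = (-(2 * Real.pi * I) * (jBP l' - (u : ℂ) / 3)
        + (2 * Real.pi * I * (jBP l + jBP l' - (u : ℂ) / 3)
        + -4 * Real.pi * I * bform (wmap s (bar l + rho)) (bar l' + rho) / u))
        + (k : ℂ) * (2 * Real.pi * I) →
      exp (2 * (Real.pi:ℂ) * I * (jBP (nabla l) + jBP l' - (u : ℂ) / 3))
        * exp (-4 * Real.pi * I * bform (wmap v (bar (nabla l) + rho)) (bar l' + rho) / u)
      = exp (-(2 * Real.pi * I) * (jBP l' - (u : ℂ) / 3))
        * (exp (2 * Real.pi * I * (jBP l + jBP l' - (u : ℂ) / 3))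
          * exp (-4 * Real.pi * I * bform (wmap s (bar l + rho)) (bar l' + rho) / u)) := by
    intro v s k hk
    rw [← exp_add, ← exp_add, ← exp_add]
    exact expkey _ _ k hk
  have h0 := h 0 4 (-((l.2.2 : ℤ) + l'.2.1 + l'.2.2 + 3)) (by
    simp only [wmap0, wmap4, bform, bar, rho, jBP, nabla, Prod.mk_add_mk]
    rw [hu']; push_cast; field_simp; ring)
  have h1 := h 1 5 (-((l.2.2 : ℤ) + l'.2.1 + l'.2.2 + 3)) (by
    simp only [wmap1, wmap5, bform, bar, rho, jBP, nabla, Prod.mk_add_mk]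
    rw [hu']; push_cast; field_simp; ring)
  have h2 := h 2 1 ((l'.2.2 : ℤ) - l'.2.1 - l.2.2 - 1) (by
    simp only [wmap2, wmap1, bform, bar, rho, jBP, nabla, Prod.mk_add_mk]
    rw [hu']; push_cast; field_simp; ring)
  have h4 := h 4 3 ((l'.2.2 : ℤ) - l'.2.1 - l.2.2 - 1) (by
    simp only [wmap4, wmap3, bform, bar, rho, jBP, nabla, Prod.mk_add_mk]
    rw [hu']; push_cast; field_simp; ring)
  have h3 := h 3 0 ((l'.2.1 : ℤ) + l'.2.2 - l.2.2 + 1) (by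
    simp only [wmap3, wmap0, bform, bar, rho, jBP, nabla, Prod.mk_add_mk]
    rw [hu']; push_cast; field_simp; ring)
  have h5 := h 5 2 ((l'.2.1 : ℤ) + l'.2.2 - l.2.2 + 1) (by
    simp only [wmap5, wmap2, bform, bar, rho, jBP, nabla, Prod.mk_add_mk]
    rw [hu']; push_cast; field_simp; ring)
  simp only [SBP, Fin.sum_univ_six, show wdet 0 = 1 from rfl, show wdet 1 = -1 from rfl,
    show wdet 2 = -1 from rfl, show wdet 3 = 1 from rfl,
    show wdet 4 = 1 from rfl, show wdet 5 = -1 from rfl, Int.cast_one, Int.cast_neg]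
  linear_combination (I / (Real.sqrt 3 * u)) * (h0 - h1 - h2 + h3 + h4 - h5)

lemma SBP_nabla_iter (u : ℕ) (hu : 3 ≤ u) (l' : ℕ × ℕ × ℕ) (m : ℕ) :
    ∀ l : ℕ × ℕ × ℕ, l.1 + l.2.1 + l.2.2 = u - 3 →
    SBP u (nabla^[m] l) l' =
      exp (-(2 * Real.pi * I) * (jBP l' - (u : ℂ) / 3)) ^ m * SBP u l l' := by
  induction m with
  | zero => intro l _; simp
  | succ m ih =>
    intro l hs
    rw [Function.iterate_succ_apply, ih (nabla l) (by simp only [nabla]; omega),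
      SBP_nabla u hu l l' hs, pow_succ]
    ring

/-- The factorization of the `n`-dependence along the semirelaxed coresolution:
with `ω₃∨ = (1,-1)` and `ω₃ = (1,-1)`,
`S_{(g+n·ω₃∨,∇ⁿ(λ),γ-n(u/2)ω₃),(g′,λ′,γ′)}
  = e^{-2πi·n·(⟨γ′,ω₃∨⟩+j_{λ′}-u/3)}·S_{(g,λ,γ),(g′,λ′,γ′)}`. -/
theorem stmt14 (u : ℕ) (hu : 3 ≤ u) (hodd : Odd u)
    (n : ℤ) (g g' : ℤ × ℤ) (l l' : ℕ × ℕ × ℕ)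
    (hl : l ∈ Pplus u) (hl' : l' ∈ Pplus u) (γ γ' : ℝ × ℝ) :
    Sfull u (g + n • ((1 : ℤ), (-1 : ℤ))) (nablaZ n l)
        (γ - ((n : ℝ) * (u : ℝ) / 2) • ((1 : ℝ), (-1 : ℝ))) g' l' γ'
      = exp (-2 * Real.pi * I * (n : ℂ) *
          (bform (rpair γ') (cw (1, -1)) + jBP l' - (u : ℂ) / 3)) *
          Sfull u g l γ g' l' γ' := by
  have hs : l.1 + l.2.1 + l.2.2 = u - 3 := (Finset.mem_filter.mp hl).2
  have hu0 : (u : ℂ) ≠ 0 := Nat.cast_ne_zero.mpr (by omega)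
  set X : ℂ := -(2 * Real.pi * I) * (jBP l' - (u : ℂ) / 3) with hX
  have hm0 : 0 ≤ n % 3 := Int.emod_nonneg n (by norm_num)
  have hmn : ((n % 3).toNat : ℤ) = n % 3 := Int.toNat_of_nonneg hm0
  have hE : SBP u (nablaZ n l) l' = exp ((n : ℂ) * X) * SBP u l l' := by
    rw [nablaZ, SBP_nabla_iter u hu l' ((n % 3).toNat) l hs, ← Complex.exp_nat_mul]
    congr 1
    refine expkey _ _ ((n / 3) * ((l'.2.2 : ℤ) - (l'.2.1 : ℤ) - (u : ℤ))) ?_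
    have h' : 3 * (n / 3) + ((n % 3).toNat : ℤ) = n := by omega
    have hnc : (n : ℂ) = 3 * ((n / 3 : ℤ) : ℂ) + (((n % 3).toNat : ℕ) : ℂ) := by
      have h2 := congrArg (Int.cast : ℤ → ℂ) h'
      push_cast at h2
      linear_combination -h2
    rw [hnc]
    simp only [hX, jBP]
    push_cast
    ring
  simp only [Sfull]
  rw [hE]
  have hexp : exp (-2 * (Real.pi:ℂ) * I *
      (bform (cw (g + n • ((1 : ℤ), (-1 : ℤ)))) (cw g') * u / 2
        + bform (rpair (γ - ((n : ℝ) * (u : ℝ) / 2) • ((1 : ℝ), (-1 : ℝ)))) (cw g')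
        + bform (cw (g + n • ((1 : ℤ), (-1 : ℤ)))) (rpair γ'))) * exp ((n : ℂ) * X)
      = exp (-2 * Real.pi * I * (n : ℂ) *
          (bform (rpair γ') (cw (1, -1)) + jBP l' - (u : ℂ) / 3)) *
        exp (-2 * Real.pi * I *
          (bform (cw g) (cw g') * u / 2 + bform (rpair γ) (cw g') + bform (cw g) (rpair γ'))) := by
    rw [← exp_add, ← exp_add]
    congr 1
    simp only [hX, bform, cw, rpair, jBP, Prod.fst_add, Prod.snd_add, Prod.fst_sub,
      Prod.snd_sub, Prod.smul_mk, smul_eq_mul, zsmul_eq_mul, Prod.mk.injEq]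
    push_cast
    ring
  linear_combination SBP u l l' * hexp

end
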